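/- If for each element e the local integrals satisfy ∫_{Ω^e} N̂^e_a N^e_b dΩ = ω^e_a δ_{ab} (with ω^e_a the element weights), and for each global function index A the weights over the elements in its support sum to one, Σ_{e : Ω^e ⊆ Ω^A} ω^e_{a(e,A)} = 1, then the globally assembled pairing satisfies ∫_Ω N̂_A N_B dΩ = δ_{AB}. -/

import Mathlib

open MeasureTheory

theorem integral_eq_sum_setIntegral_of_iUnion_eq_univ {α ι E : Type*} [MeasurableSpace α]
    [Fintype ι] [NormedAddCommGroup E] [NormedSpace ℝ E] {μ : Measure α} {s : ι → Set α}
    (hs : ∀ i, MeasurableSet (s i)) (hd : Pairwise (Function.onFun Disjoint s))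
    (hU : ⋃ i, s i = Set.univ) {f : α → E}
    (hf : Integrable f μ) :
    ∫ x, f x ∂μ = ∑ i, ∫ x in s i, f x ∂μ := by
  rw [← integral_iUnion_fintype hs hd fun _ => hf.integrableOn, hU, Measure.restrict_univ]

/-- if on each element `Ω^e` the local pairing is
`∫_{Ω^e} N̂_A N_B = ω^e_A δ_{AB}` when `e` supports `A` (and `0` otherwise, since
`N̂_A` vanishes off its support and distinct global functions are locally
biorthogonal), and for each global index `A` the weights over the elements in
its support sum to one, then the assembled global pairing satisfies
`∫_Ω N̂_A N_B = δ_{AB}`. -/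
theorem assembled_biorthogonality
    {Ω : Type*} [MeasurableSpace Ω] (μ : Measure Ω) (m n : ℕ)
    (elem : Fin m → Set Ω)
    (hMeas : ∀ e, MeasurableSet (elem e))
    (hDisj : Pairwise (Function.onFun Disjoint elem))
    (hCover : (⋃ e, elem e) = Set.univ)
    (N Nhat : Fin n → Ω → ℝ)
    (supp : Fin n → Finset (Fin m))
    (ω : Fin m → Fin n → ℝ)
    (hInt : ∀ A B, Integrable (fun x => Nhat A x * N B x) μ)
    (hLocal : ∀ e A B, ∫ x in elem e, Nhat A x * N B x ∂μ =
        if A = B ∧ e ∈ supp A then ω e A else 0)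
    (hWeights : ∀ A, ∑ e ∈ supp A, ω e A = 1) :
    ∀ A B, ∫ x, Nhat A x * N B x ∂μ = if A = B then (1:ℝ) else 0 := by
  intro A B
  rw [integral_eq_sum_setIntegral_of_iUnion_eq_univ hMeas hDisj hCover (hInt A B)]
  simp only [hLocal]
  by_cases hAB : A = B
  · subst hAB
    simp only [true_and, if_true]
    rw [Finset.sum_ite_mem, Finset.univ_inter, hWeights]
  · simp [hAB]
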